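/- Let A be a Banach algebra and D : A → A* a continuous derivation such that A* ⊆ D''(A**). If the second transpose D'' : A** → A*** is a derivation (with A** carrying the first Arens product and A*** the corresponding dual A**-bimodule structure), then A is Arens regular. -/

import Mathlib

/-!
Common definitions: duals, biduals, Arens products, module actions,
derivations, first cohomology-vanishing predicates, weak-star continuity.
-/

noncomputable section

open ContinuousLinearMap Filter Topology Function

namespace ArensPaper

variable (𝕜 : Type) [RCLike 𝕜]

/-- The (topological) dual of a normed space. -/
abbrev Du (X : Type) [NormedAddCommGroup X] [NormedSpace 𝕜 X] : Type :=
  StrongDual 𝕜 X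

/-- The bidual of a normed space. -/
abbrev Bi (X : Type) [NormedAddCommGroup X] [NormedSpace 𝕜 X] : Type :=
  Du 𝕜 (Du 𝕜 X)

/-- Canonical embedding of a normed space into its bidual. -/
abbrev inDu (X : Type) [NormedAddCommGroup X] [NormedSpace 𝕜 X] : X →L[𝕜] Bi 𝕜 X :=
  NormedSpace.inclusionInDoubleDual 𝕜 X

variable {X Y Z : Type} [NormedAddCommGroup X] [NormedSpace 𝕜 X]
  [NormedAddCommGroup Y] [NormedSpace 𝕜 Y] [NormedAddCommGroup Z] [NormedSpace 𝕜 Z]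

/-- The transpose (Banach-space adjoint) of a continuous linear map. -/
def tr (T : X →L[𝕜] Y) : Du 𝕜 Y →L[𝕜] Du 𝕜 X :=
  (compL 𝕜 X Y 𝕜).flip T

/-- The second transpose of a continuous linear map. -/
def bitr (T : X →L[𝕜] Y) : Bi 𝕜 X →L[𝕜] Bi 𝕜 Y :=
  tr 𝕜 (tr 𝕜 T)

/-- The adjoint of a continuous bilinear map `m : X × Y → Z`:
`⟨adj m z' x, y⟩ = ⟨z', m x y⟩`. -/
def adj (m : X →L[𝕜] Y →L[𝕜] Z) : Du 𝕜 Z →L[𝕜] X →L[𝕜] Du 𝕜 Y :=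
  ((compL 𝕜 X (Y →L[𝕜] Z) (Du 𝕜 Y)).flip m).comp (compL 𝕜 Y Z 𝕜)

/-- The first Arens (triple adjoint) extension of a continuous bilinear map
to the biduals: `⟨ar1 m F G, z'⟩ = ⟨F, fun x => ⟨G, fun y => ⟨z', m x y⟩⟩⟩`. -/
def ar1 (m : X →L[𝕜] Y →L[𝕜] Z) : Bi 𝕜 X →L[𝕜] Bi 𝕜 Y →L[𝕜] Bi 𝕜 Z :=
  adj 𝕜 (adj 𝕜 (adj 𝕜 m))

/-- The second Arens extension of a continuous bilinear map. -/
def ar2 (m : X →L[𝕜] Y →L[𝕜] Z) : Bi 𝕜 X →L[𝕜] Bi 𝕜 Y →L[𝕜] Bi 𝕜 Z :=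
  (ar1 𝕜 m.flip).flip

/-- A continuous bilinear map is Arens regular if its two Arens extensions agree. -/
def ArensRegularBil (m : X →L[𝕜] Y →L[𝕜] Z) : Prop :=
  ar1 𝕜 m = ar2 𝕜 m

/-- A map between dual spaces is weak*-weak*-continuous. -/
def WStarCont (f : Du 𝕜 X → Du 𝕜 Y) : Prop :=
  Continuous fun x : WeakDual 𝕜 X => (show WeakDual 𝕜 Y from f (show Du 𝕜 X from x))

/-- A map from a dual space to a normed space is weak*-weak-continuous. -/
def WStarWeakCont {B : Type} [NormedAddCommGroup B] [NormedSpace 𝕜 B]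
    (f : Du 𝕜 X → B) : Prop :=
  Continuous fun x : WeakDual 𝕜 X => (show WeakSpace 𝕜 B from f (show Du 𝕜 X from x))

/-- `D` is a derivation with respect to a product `p` on `C` and module actions
`l`, `r` of `C` on `E`. -/
def IsDer {C E : Type} [NormedAddCommGroup C] [NormedSpace 𝕜 C]
    [NormedAddCommGroup E] [NormedSpace 𝕜 E]
    (p : C → C → C) (l : C → E → E) (r : E → C → E) (D : C →L[𝕜] E) : Prop :=
  ∀ a b : C, D (p a b) = l a (D b) + r (D a) b

/-- `D` is an inner derivation for the module actions `l`, `r`. -/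
def IsInner {C E : Type} [NormedAddCommGroup C] [NormedSpace 𝕜 C]
    [NormedAddCommGroup E] [NormedSpace 𝕜 E]
    (l : C → E → E) (r : E → C → E) (D : C →L[𝕜] E) : Prop :=
  ∃ x : E, ∀ a : C, D a = l a x - r x a

/-- A Banach algebra has a left bounded approximate identity. -/
def HasLBAI (A : Type) [NonUnitalNormedRing A] : Prop :=
  ∃ (ι : Type) (L : Filter ι) (e : ι → A), L.NeBot ∧ (∃ c : ℝ, ∀ i, ‖e i‖ ≤ c) ∧
    ∀ a : A, Tendsto (fun i => e i * a) L (𝓝 a)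

/-- A Banach bimodule structure on `E` over the "Banach algebra" `(C, p)`. -/
structure BimodStr {C : Type} [NormedAddCommGroup C] [NormedSpace 𝕜 C]
    (p : C →L[𝕜] C →L[𝕜] C) (E : Type) [NormedAddCommGroup E] [NormedSpace 𝕜 E] :
    Type where
  l : C →L[𝕜] E →L[𝕜] E
  r : E →L[𝕜] C →L[𝕜] E
  l_mul : ∀ a b x, l (p a b) x = l a (l b x)
  r_mul : ∀ x a b, r (r x a) b = r x (p a b)
  lr : ∀ a x b, r (l a x) b = l a (r x b)

/-- A bundled Banach bimodule over the "Banach algebra" `(C, p)`. -/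
structure BBimod {C : Type} [NormedAddCommGroup C] [NormedSpace 𝕜 C]
    (p : C →L[𝕜] C →L[𝕜] C) : Type 1 where
  E : Type
  [grp : NormedAddCommGroup E]
  [mod : NormedSpace 𝕜 E]
  [cpl : CompleteSpace E]
  str : BimodStr 𝕜 p E

attribute [instance] BBimod.grp BBimod.mod BBimod.cpl

/-- Amenability of the "Banach algebra" `(C, p)`: every continuous derivation into the
dual of any Banach bimodule is inner. -/
def IsAmenableP {C : Type} [NormedAddCommGroup C] [NormedSpace 𝕜 C]
    (p : C →L[𝕜] C →L[𝕜] C) : Prop :=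
  ∀ (M : BBimod 𝕜 p) (D : C →L[𝕜] Du 𝕜 M.E),
    IsDer 𝕜 (fun a b => p a b)
      (fun a f => f.comp (M.str.r.flip a)) (fun f a => f.comp (M.str.l a)) D →
    IsInner 𝕜 (fun a f => f.comp (M.str.r.flip a)) (fun f a => f.comp (M.str.l a)) D

/-- Weak amenability of a Banach algebra: every continuous derivation into the dual
(with the dual actions of the regular bimodule) is inner. -/
def WeaklyAmenable (A : Type) [NonUnitalNormedRing A] [NormedSpace 𝕜 A]
    [IsScalarTower 𝕜 A A] [SMulCommClass 𝕜 A A] : Prop :=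
  ∀ D : A →L[𝕜] Du 𝕜 A,
    IsDer 𝕜 (fun a b => a * b)
      (fun a f => f.comp ((ContinuousLinearMap.mul 𝕜 A).flip a))
      (fun f a => f.comp (ContinuousLinearMap.mul 𝕜 A a)) D →
    IsInner 𝕜 (fun a f => f.comp ((ContinuousLinearMap.mul 𝕜 A).flip a))
      (fun f a => f.comp (ContinuousLinearMap.mul 𝕜 A a)) D

/-- The embedding of the predual `X` into the dual `A*`, given an identification
`j : A ≃ X*`. -/
def predualEmbed {A X : Type} [NormedAddCommGroup A] [NormedSpace 𝕜 A]
    [NormedAddCommGroup X] [NormedSpace 𝕜 X] (j : A ≃ₗᵢ[𝕜] Du 𝕜 X) (x : X) : Du 𝕜 A :=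
  (inDu 𝕜 X x).comp j.toLinearIsometry.toContinuousLinearMap

/-- `j : A ≃ X*` makes `A` a dual Banach algebra: the image of `X` in `A*` is a
submodule of `A*` for the dual actions. -/
def IsDualBanachAlgebra {A X : Type} [NonUnitalNormedRing A] [NormedSpace 𝕜 A]
    [IsScalarTower 𝕜 A A] [SMulCommClass 𝕜 A A]
    [NormedAddCommGroup X] [NormedSpace 𝕜 X] (j : A ≃ₗᵢ[𝕜] Du 𝕜 X) : Prop :=
  ∀ (a : A) (x : X),
    ((predualEmbed 𝕜 j x).comp ((ContinuousLinearMap.mul 𝕜 A).flip a)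
        ∈ Set.range (predualEmbed 𝕜 j)) ∧
    ((predualEmbed 𝕜 j x).comp (ContinuousLinearMap.mul 𝕜 A a)
        ∈ Set.range (predualEmbed 𝕜 j))

/-- A normed space is weakly sequentially complete. -/
def WSCSpace (E : Type) [NormedAddCommGroup E] [NormedSpace 𝕜 E] : Prop :=
  ∀ f : ℕ → E,
    (∀ φ : Du 𝕜 E, ∃ L : 𝕜, Tendsto (fun n => φ (f n)) atTop (𝓝 L)) →
    ∃ e : E, ∀ φ : Du 𝕜 E, Tendsto (fun n => φ (f n)) atTop (𝓝 (φ e))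

/-- Left multiplication by `a ∈ A` restricted to an ideal `I`. -/
def mulLRes {A : Type} [NonUnitalNormedRing A] [NormedSpace 𝕜 A]
    [IsScalarTower 𝕜 A A] [SMulCommClass 𝕜 A A] (I : Submodule 𝕜 A) (a : A)
    (h : ∀ x : I, a * (x : A) ∈ I) : I →L[𝕜] I :=
  ((ContinuousLinearMap.mul 𝕜 A a).comp I.subtypeL).codRestrict I h

/-- Right multiplication by `a ∈ A` restricted to an ideal `I`. -/
def mulRRes {A : Type} [NonUnitalNormedRing A] [NormedSpace 𝕜 A]
    [IsScalarTower 𝕜 A A] [SMulCommClass 𝕜 A A] (I : Submodule 𝕜 A) (a : A)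
    (h : ∀ x : I, (x : A) * a ∈ I) : I →L[𝕜] I :=
  (((ContinuousLinearMap.mul 𝕜 A).flip a).comp I.subtypeL).codRestrict I h


/-- Connes-amenability of the bidual algebra `(A**, p)`: every weak*-weak*-continuous
derivation into a normal dual Banach bimodule is inner. -/
def ConnesAmenableBidual {A : Type} [NonUnitalNormedRing A] [NormedSpace 𝕜 A]
    [IsScalarTower 𝕜 A A] [SMulCommClass 𝕜 A A]
    (p : Bi 𝕜 A →L[𝕜] Bi 𝕜 A →L[𝕜] Bi 𝕜 A) : Prop :=
  ∀ (X : Type) [NormedAddCommGroup X] [NormedSpace 𝕜 X] [CompleteSpace X]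
    (M : BimodStr 𝕜 p (Du 𝕜 X)),
    (∀ f : Du 𝕜 X, WStarCont 𝕜 (fun m : Bi 𝕜 A => M.l m f) ∧
        WStarCont 𝕜 (fun m : Bi 𝕜 A => M.r f m)) →
    ∀ D : Bi 𝕜 A →L[𝕜] Du 𝕜 X,
      IsDer 𝕜 (fun m n => p m n) (fun m f => M.l m f) (fun f m => M.r f m) D →
      WStarCont 𝕜 (fun m => D m) →
      IsInner 𝕜 (fun m f => M.l m f) (fun f m => M.r f m) D

/-!
Write `D' = tr D : A** → A*`, so that `D''(K)(F) = K(D' F)`, and fix `f ∈ A*` and `M ∈ A**` with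
`D''(M) = f`, i.e. `M(D' K) = K(f)` for all `K`. Transposing the derivation identity of `D` and
applying `M` gives `M·D'(F) = f·F + D'(M□F)` in `A*`, where `(f·F)(a) = F(a·f)` is the action
defining the second Arens product. Evaluating `D''(G□M) = G·D''(M) + D''(G)·M` at `F` gives
`G(M·D'F) = (F□G)(f) + G(D'(M□F))`. Comparing the two, `(F□G)(f) = G(f·F) = (F◇G)(f)`.
-/

section Derivation

variable {𝕜} {A : Type} [NonUnitalNormedRing A] [NormedSpace 𝕜 A] [IsScalarTower 𝕜 A A]
  [SMulCommClass 𝕜 A A]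

theorem adj_mul_tr_of_isDer {D : A →L[𝕜] Du 𝕜 A}
    (hD : IsDer 𝕜 (fun a b => a * b)
      (fun (a : A) (f : Du 𝕜 A) => f.comp ((ContinuousLinearMap.mul 𝕜 A).flip a))
      (fun (f : Du 𝕜 A) (a : A) => f.comp (ContinuousLinearMap.mul 𝕜 A a)) D)
    (F : Bi 𝕜 A) (a : A) :
    adj 𝕜 (ContinuousLinearMap.mul 𝕜 A) (tr 𝕜 D F) a =
      tr 𝕜 D (bitr 𝕜 ((ContinuousLinearMap.mul 𝕜 A).flip a) F) +
        adj 𝕜 (adj 𝕜 (ContinuousLinearMap.mul 𝕜 A)) F (D a) := by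
  ext b
  change F (D (a * b)) = F ((D b).comp _) + F ((D a).comp _)
  rw [hD a b, map_add]
  rfl

theorem adj_adj_mul_tr_of_isDer {D : A →L[𝕜] Du 𝕜 A}
    (hD : IsDer 𝕜 (fun a b => a * b)
      (fun (a : A) (f : Du 𝕜 A) => f.comp ((ContinuousLinearMap.mul 𝕜 A).flip a))
      (fun (f : Du 𝕜 A) (a : A) => f.comp (ContinuousLinearMap.mul 𝕜 A a)) D)
    {M : Bi 𝕜 A} {f : Du 𝕜 A} (hM : bitr 𝕜 D M = inDu 𝕜 (Du 𝕜 A) f) (F : Bi 𝕜 A) :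
    adj 𝕜 (adj 𝕜 (ContinuousLinearMap.mul 𝕜 A)) M (tr 𝕜 D F) =
      adj 𝕜 (adj 𝕜 (ContinuousLinearMap.mul 𝕜 A).flip) F f +
        tr 𝕜 D (ar1 𝕜 (ContinuousLinearMap.mul 𝕜 A) M F) := by
  have hM' (K : Bi 𝕜 A) : M (tr 𝕜 D K) = K f := DFunLike.congr_fun hM K
  ext a
  change M (adj 𝕜 _ (tr 𝕜 D F) a) = _
  rw [adj_mul_tr_of_isDer hD, map_add, hM']
  rfl

theorem ar1_mul_apply_eq_ar2_mul_apply_of_bitr_isDer {D : A →L[𝕜] Du 𝕜 A}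
    (hD : IsDer 𝕜 (fun a b => a * b)
      (fun (a : A) (f : Du 𝕜 A) => f.comp ((ContinuousLinearMap.mul 𝕜 A).flip a))
      (fun (f : Du 𝕜 A) (a : A) => f.comp (ContinuousLinearMap.mul 𝕜 A a)) D)
    (hD'' : IsDer 𝕜 (fun m n => ar1 𝕜 (ContinuousLinearMap.mul 𝕜 A) m n)
      (fun (m : Bi 𝕜 A) (F : Du 𝕜 (Bi 𝕜 A)) =>
        F.comp ((ar1 𝕜 (ContinuousLinearMap.mul 𝕜 A)).flip m))
      (fun (F : Du 𝕜 (Bi 𝕜 A)) (m : Bi 𝕜 A) =>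
        F.comp (ar1 𝕜 (ContinuousLinearMap.mul 𝕜 A) m))
      (bitr 𝕜 D))
    {M : Bi 𝕜 A} {f : Du 𝕜 A} (hM : bitr 𝕜 D M = inDu 𝕜 (Du 𝕜 A) f) (F G : Bi 𝕜 A) :
    ar1 𝕜 (ContinuousLinearMap.mul 𝕜 A) F G f = ar2 𝕜 (ContinuousLinearMap.mul 𝕜 A) F G f := by
  have hM' (K : Bi 𝕜 A) : M (tr 𝕜 D K) = K f := DFunLike.congr_fun hM K
  have hGM : G (adj 𝕜 (adj 𝕜 (ContinuousLinearMap.mul 𝕜 A)) M (tr 𝕜 D F)) =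
      M (tr 𝕜 D (ar1 𝕜 (ContinuousLinearMap.mul 𝕜 A) F G)) +
        G (tr 𝕜 D (ar1 𝕜 (ContinuousLinearMap.mul 𝕜 A) M F)) :=
    DFunLike.congr_fun (hD'' G M) F
  rw [adj_adj_mul_tr_of_isDer hD hM, map_add, add_left_inj, hM'] at hGM
  exact hGM.symm

end Derivation

theorem statement18_general {𝕜 : Type} [RCLike 𝕜] {A : Type}
    [NonUnitalNormedRing A] [NormedSpace 𝕜 A] [IsScalarTower 𝕜 A A]
    [SMulCommClass 𝕜 A A]
    -- `D : A → A*` is a continuous derivation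
    (D : A →L[𝕜] Du 𝕜 A)
    (hD : IsDer 𝕜 (fun a b => a * b)
      (fun (a : A) (f : Du 𝕜 A) => f.comp ((ContinuousLinearMap.mul 𝕜 A).flip a))
      (fun (f : Du 𝕜 A) (a : A) => f.comp (ContinuousLinearMap.mul 𝕜 A a)) D)
    -- `A* ⊆ D''(A**)`
    (hsub : ∀ f : Du 𝕜 A, ∃ m : Bi 𝕜 A, bitr 𝕜 D m = inDu 𝕜 (Du 𝕜 A) f)
    -- `D'' : A** → A***` is a derivation
    (hD'' : IsDer 𝕜 (fun m n => ar1 𝕜 (ContinuousLinearMap.mul 𝕜 A) m n)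
      (fun (m : Bi 𝕜 A) (F : Du 𝕜 (Bi 𝕜 A)) =>
        F.comp ((ar1 𝕜 (ContinuousLinearMap.mul 𝕜 A)).flip m))
      (fun (F : Du 𝕜 (Bi 𝕜 A)) (m : Bi 𝕜 A) =>
        F.comp (ar1 𝕜 (ContinuousLinearMap.mul 𝕜 A) m))
      (bitr 𝕜 D)) :
    -- `A` is Arens regular
    ArensRegularBil 𝕜 (ContinuousLinearMap.mul 𝕜 A) := by
  ext F G f
  obtain ⟨M, hM⟩ := hsub f
  exact ar1_mul_apply_eq_ar2_mul_apply_of_bitr_isDer hD hD'' hM F G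

/-- Let `A` be a Banach algebra and `D : A → A*` a continuous derivation such that
`A* ⊆ D''(A**)`.  If the second transpose `D'' : A** → A***` is a derivation, then `A`
is Arens regular. -/
theorem statement18 {𝕜 : Type} [RCLike 𝕜] {A : Type}
    [NonUnitalNormedRing A] [NormedSpace 𝕜 A] [IsScalarTower 𝕜 A A]
    [SMulCommClass 𝕜 A A] [CompleteSpace A]
    -- `D : A → A*` is a continuous derivation
    (D : A →L[𝕜] Du 𝕜 A)
    (hD : IsDer 𝕜 (fun a b => a * b)
      (fun (a : A) (f : Du 𝕜 A) => f.comp ((ContinuousLinearMap.mul 𝕜 A).flip a))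
      (fun (f : Du 𝕜 A) (a : A) => f.comp (ContinuousLinearMap.mul 𝕜 A a)) D)
    -- `A* ⊆ D''(A**)`
    (hsub : ∀ f : Du 𝕜 A, ∃ m : Bi 𝕜 A, bitr 𝕜 D m = inDu 𝕜 (Du 𝕜 A) f)
    -- `D'' : A** → A***` is a derivation
    (hD'' : IsDer 𝕜 (fun m n => ar1 𝕜 (ContinuousLinearMap.mul 𝕜 A) m n)
      (fun (m : Bi 𝕜 A) (F : Du 𝕜 (Bi 𝕜 A)) =>
        F.comp ((ar1 𝕜 (ContinuousLinearMap.mul 𝕜 A)).flip m))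
      (fun (F : Du 𝕜 (Bi 𝕜 A)) (m : Bi 𝕜 A) =>
        F.comp (ar1 𝕜 (ContinuousLinearMap.mul 𝕜 A) m))
      (bitr 𝕜 D)) :
    -- `A` is Arens regular
    ArensRegularBil 𝕜 (ContinuousLinearMap.mul 𝕜 A) :=
  statement18_general D hD hsub hD''

end ArensPaper
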